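/- arXiv:1901.07218 — 2 statements merged into one kernel-verified Lean document; each statement's English description precedes it below -/
import Mathlib

section
/- Let a ∈ (0,1), q ∈ ℝ, ζ ∈ ℂ, f ∈ L²(0,a), and let u ∈ L²(0,a) ∩ W²_{2,loc}((0,a]) solve −u'' + (q/x) u = ζ u + f on (0,a). Then the limit u(+0) = lim_{x→0+} u(x) exists and is finite. -/
open MeasureTheory Filter

set_option maxHeartbeats 1000000

/-- An `L²` solution of `−u'' + (q/x)u = ζu + f` on `(0,a)` has a finite limit
`u(+0)` as `x → 0+`. -/
theorem stmt_11 (a : ℝ) (ha : 0 < a) (ha1 : a < 1) (q : ℝ) (ζ : ℂ)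
    (f u : ℝ → ℂ) (u' : ℝ → ℂ)
    (hf : IntegrableOn (fun x => ‖f x‖ ^ 2) (Set.Ioo 0 a))
    (hu : IntegrableOn (fun x => ‖u x‖ ^ 2) (Set.Ioo 0 a))
    (hu' : ∀ x ∈ Set.Ioo (0 : ℝ) a, HasDerivAt u (u' x) x)
    (hu'' : ∀ x ∈ Set.Ioo (0 : ℝ) a,
      HasDerivAt u' (((q / x : ℝ) : ℂ) * u x - ζ * u x - f x) x) :
    ∃ l : ℂ, Tendsto u (nhdsWithin 0 (Set.Ioi 0)) (nhds l) := by
  have hvol : volume (Set.Ioo (0:ℝ) a) < ⊤ := measure_Ioo_lt_top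
  set c : ℝ := a / 2 with hcdef
  have hc0 : 0 < c := by positivity
  have hca : c < a := by
    rw [hcdef]; linarith
  set g : ℝ → ℂ := fun s => ((q / s : ℝ) : ℂ) * u s - ζ * u s - f s with hgdef
  have hucont : ContinuousOn u (Set.Ioo 0 a) := fun x hx =>
    ((hu' x hx).continuousAt).continuousWithinAt
  have hu'cont : ContinuousOn u' (Set.Ioo 0 a) := fun x hx =>
    ((hu'' x hx).continuousAt).continuousWithinAt
  have humeas : AEStronglyMeasurable u (volume.restrict (Set.Ioo 0 a)) :=
    hucont.aestronglyMeasurable measurableSet_Ioo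
  have huInt : IntegrableOn u (Set.Ioo 0 a) := by
    have hb : IntegrableOn (fun x => (‖u x‖ ^ 2 + 1) / 2) (Set.Ioo 0 a) :=
      (hu.add (integrableOn_const hvol.ne)).div_const 2
    refine Integrable.mono' hb humeas (ae_of_all _ fun x => ?_)
    nlinarith [sq_nonneg (‖u x‖ - 1), norm_nonneg (u x)]
  have hfeq : ∀ x ∈ Set.Ioo (0:ℝ) a,
      f x = ((q / x : ℝ) : ℂ) * u x - ζ * u x - deriv u' x := by
    intro x hx
    rw [(hu'' x hx).deriv]; ring
  have hfmeas : AEStronglyMeasurable f (volume.restrict (Set.Ioo 0 a)) := by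
    have hm : AEStronglyMeasurable
        (fun x => ((q / x : ℝ) : ℂ) * u x - ζ * u x - deriv u' x)
        (volume.restrict (Set.Ioo 0 a)) := by
      refine AEStronglyMeasurable.sub (AEStronglyMeasurable.sub ?_ ?_) ?_
      · exact ((Complex.measurable_ofReal.comp
          (measurable_const.div measurable_id)).aestronglyMeasurable).mul humeas
      · exact humeas.const_mul ζ
      · exact (measurable_deriv u').aestronglyMeasurable
    exact hm.congr ((ae_restrict_iff' measurableSet_Ioo).2
      (ae_of_all _ fun x hx => (hfeq x hx).symm))
  have hfInt : IntegrableOn f (Set.Ioo 0 a) := by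
    have hb : IntegrableOn (fun x => (‖f x‖ ^ 2 + 1) / 2) (Set.Ioo 0 a) :=
      (hf.add (integrableOn_const hvol.ne)).div_const 2
    refine Integrable.mono' hb hfmeas (ae_of_all _ fun x => ?_)
    nlinarith [sq_nonneg (‖f x‖ - 1), norm_nonneg (f x)]
  -- integrability of g on compact subintervals
  have hgInt : ∀ ε : ℝ, 0 < ε → IntegrableOn g (Set.Icc ε c) := by
    intro ε hε
    have hsub : Set.Icc ε c ⊆ Set.Ioo 0 a := fun x hx =>
      ⟨lt_of_lt_of_le hε hx.1, lt_of_le_of_lt hx.2 hca⟩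
    have h1 : IntegrableOn (fun s => ((q / s : ℝ) : ℂ) * u s) (Set.Icc ε c) := by
      refine ContinuousOn.integrableOn_compact isCompact_Icc (ContinuousOn.mul ?_ (hucont.mono hsub))
      exact Complex.continuous_ofReal.comp_continuousOn
        (continuousOn_const.div continuousOn_id
          (fun x hx => ne_of_gt (lt_of_lt_of_le hε hx.1)))
    have h2 : IntegrableOn (fun s => ζ * u s) (Set.Icc ε c) :=
      (huInt.mono_set hsub).const_mul ζ
    exact (h1.sub h2).sub (hfInt.mono_set hsub)
  have hgII : ∀ p : ℝ, 0 < p → p ≤ c → IntervalIntegrable g volume p c := by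
    intro p hp hpc
    refine ((hgInt p hp).mono_set ?_).intervalIntegrable
    rw [Set.uIcc_of_le hpc]
  set B : ℝ → ℂ := fun y => ∫ s in y..c, g s with hBdef
  have hFTC : ∀ y, 0 < y → y ≤ c → B y = u' c - u' y := by
    intro y hy hyc
    refine intervalIntegral.integral_eq_sub_of_hasDerivAt (fun t ht => ?_) (hgII y hy hyc)
    rw [Set.uIcc_of_le hyc] at ht
    exact hu'' t ⟨lt_of_lt_of_le hy ht.1, lt_of_le_of_lt ht.2 hca⟩
  -- representation of u
  have hrep : ∀ x, 0 < x → x < c →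
      u x = u c - u' c * ((c - x : ℝ) : ℂ) + ∫ y in x..c, B y := by
    intro x hx hxc
    have hsub : Set.Icc x c ⊆ Set.Ioo 0 a := fun t ht =>
      ⟨lt_of_lt_of_le hx ht.1, lt_of_le_of_lt ht.2 hca⟩
    have hu'II : IntervalIntegrable u' volume x c := by
      refine ((hu'cont.mono hsub).mono ?_).intervalIntegrable
      rw [Set.uIcc_of_le hxc.le]
    have h2 : ∫ y in x..c, u' y = u c - u x := by
      refine intervalIntegral.integral_eq_sub_of_hasDerivAt (fun t ht => ?_) hu'II
      rw [Set.uIcc_of_le hxc.le] at ht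
      exact hu' t (hsub ht)
    have h3 : ∫ y in x..c, B y = ((c - x : ℝ) : ℂ) * u' c - (u c - u x) := by
      have hcongr : ∫ y in x..c, B y = ∫ y in x..c, (u' c - u' y) := by
        refine intervalIntegral.integral_congr fun y hy => ?_
        rw [Set.uIcc_of_le hxc.le] at hy
        exact hFTC y (lt_of_lt_of_le hx hy.1) hy.2
      rw [hcongr, intervalIntegral.integral_sub intervalIntegrable_const hu'II, h2,
        intervalIntegral.integral_const, Complex.real_smul]
    rw [h3]; ring
  -- B is continuous on (0, c]
  have hsub2 : Set.Ioc (0:ℝ) c ⊆ Set.Ioo 0 a := fun t ht => ⟨ht.1, lt_of_le_of_lt ht.2 hca⟩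
  have hBcont : ContinuousOn B (Set.Ioc 0 c) :=
    ContinuousOn.congr (continuousOn_const.sub (hu'cont.mono hsub2))
      (fun y hy => hFTC y hy.1 hy.2)
  have hBmeas : AEStronglyMeasurable B (volume.restrict (Set.Ioc 0 c)) :=
    hBcont.aestronglyMeasurable measurableSet_Ioc
  -- the bound on B
  set Ku : ℝ := ∫ x in Set.Ioo 0 a, ‖u x‖ ^ 2 with hKudef
  set C2 : ℝ := ∫ x in Set.Ioo 0 a, (‖ζ‖ * ‖u x‖ + ‖f x‖) with hC2def
  set C1 : ℝ := |q| / 2 * (Ku + 1) with hC1def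
  have hBbd : ∀ y, 0 < y → y ≤ c → ‖B y‖ ≤ C1 * (Real.sqrt y)⁻¹ + C2 := by
    intro y hy hyc
    set w : ℝ := Real.sqrt y with hwdef
    have hw : 0 < w := Real.sqrt_pos.2 hy
    have hww : w * w = y := Real.mul_self_sqrt hy.le
    have hsubyc : Set.Ioc y c ⊆ Set.Ioo 0 a := fun t ht =>
      ⟨lt_trans hy ht.1, lt_of_le_of_lt ht.2 hca⟩
    have hgnInt : IntegrableOn (fun s => ‖g s‖) (Set.Ioc y c) :=
      ((hgInt y hy).mono_set Set.Ioc_subset_Icc_self).norm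
    -- pieces of the dominating function
    have hI1 : IntegrableOn (fun s => ‖u s‖ ^ 2) (Set.Ioc y c) := hu.mono_set hsubyc
    have hI2 : IntegrableOn (fun s => (s ^ 2)⁻¹) (Set.Ioc y c) := by
      refine (ContinuousOn.integrableOn_compact isCompact_Icc ?_).mono_set Set.Ioc_subset_Icc_self
      exact ContinuousOn.inv₀ (continuousOn_pow 2)
        (fun s hs => pow_ne_zero 2 (ne_of_gt (lt_of_lt_of_le hy hs.1)))
    have hI3 : IntegrableOn (fun s => ‖ζ‖ * ‖u s‖ + ‖f s‖) (Set.Ioc y c) :=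
      IntegrableOn.mono_set ((huInt.norm.const_mul ‖ζ‖).add hfInt.norm) hsubyc
    have hI12 : IntegrableOn (fun s => |q| / 2 * (w⁻¹ * ‖u s‖ ^ 2 + w * (s ^ 2)⁻¹)) (Set.Ioc y c) :=
      (((hI1.const_mul w⁻¹).add (hI2.const_mul w)).const_mul (|q| / 2))
    have hpt : ∀ s ∈ Set.Ioc y c, ‖g s‖ ≤
        |q| / 2 * (w⁻¹ * ‖u s‖ ^ 2 + w * (s ^ 2)⁻¹) + (‖ζ‖ * ‖u s‖ + ‖f s‖) := by
      intro s hs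
      have hs0 : 0 < s := lt_trans hy hs.1
      have hns : ‖g s‖ ≤ |q| / s * ‖u s‖ + (‖ζ‖ * ‖u s‖ + ‖f s‖) := by
        rw [hgdef]
        refine le_trans (norm_sub_le _ _) ?_
        have h1 : ‖((q / s : ℝ) : ℂ) * u s - ζ * u s‖ ≤ |q| / s * ‖u s‖ + ‖ζ‖ * ‖u s‖ := by
          refine le_trans (norm_sub_le _ _) ?_
          rw [norm_mul, norm_mul, Complex.norm_real, Real.norm_eq_abs, abs_div,
            abs_of_pos hs0]
        linarith [h1]
      refine le_trans hns ?_
      have key : |q| / s * ‖u s‖ ≤ |q| / 2 * (w⁻¹ * ‖u s‖ ^ 2 + w * (s ^ 2)⁻¹) := by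
        have hamgm : 2 * (‖u s‖ / s) ≤ w⁻¹ * ‖u s‖ ^ 2 + w * (s ^ 2)⁻¹ := by
          rw [← sub_nonneg]
          have e : w⁻¹ * ‖u s‖ ^ 2 + w * (s ^ 2)⁻¹ - 2 * (‖u s‖ / s) =
              (s * ‖u s‖ - w) ^ 2 / (w * s ^ 2) := by
            field_simp
            ring
          rw [e]; positivity
        have : |q| / s * ‖u s‖ = |q| / 2 * (2 * (‖u s‖ / s)) := by
          field_simp
        rw [this]
        exact mul_le_mul_of_nonneg_left hamgm (by positivity)
      linarith
    have hnorm1 : ‖B y‖ ≤ ∫ s in y..c, ‖g s‖ :=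
      intervalIntegral.norm_integral_le_integral_norm hyc
    rw [intervalIntegral.integral_of_le hyc] at hnorm1
    have hmono : ∫ s in Set.Ioc y c, ‖g s‖ ≤
        ∫ s in Set.Ioc y c, (|q| / 2 * (w⁻¹ * ‖u s‖ ^ 2 + w * (s ^ 2)⁻¹) + (‖ζ‖ * ‖u s‖ + ‖f s‖)) :=
      setIntegral_mono_on hgnInt (hI12.add hI3) measurableSet_Ioc hpt
    have hsplit : ∫ s in Set.Ioc y c,
        (|q| / 2 * (w⁻¹ * ‖u s‖ ^ 2 + w * (s ^ 2)⁻¹) + (‖ζ‖ * ‖u s‖ + ‖f s‖)) =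
        |q| / 2 * (w⁻¹ * (∫ s in Set.Ioc y c, ‖u s‖ ^ 2) + w * (∫ s in Set.Ioc y c, (s ^ 2)⁻¹))
          + ∫ s in Set.Ioc y c, (‖ζ‖ * ‖u s‖ + ‖f s‖) := by
      rw [integral_add hI12 hI3, integral_const_mul, integral_add (hI1.const_mul _) (hI2.const_mul _),
        integral_const_mul, integral_const_mul]
    -- bounds on the three integrals
    have hb1 : ∫ s in Set.Ioc y c, ‖u s‖ ^ 2 ≤ Ku := by
      refine setIntegral_mono_set hu (ae_of_all _ fun s => sq_nonneg _) ?_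
      exact HasSubset.Subset.eventuallyLE hsubyc
    have hb2 : ∫ s in Set.Ioc y c, (s ^ 2)⁻¹ ≤ y⁻¹ := by
      have hder : ∀ t ∈ Set.uIcc y c, HasDerivAt (fun t : ℝ => -t⁻¹) ((t ^ 2)⁻¹) t := by
        intro t ht
        rw [Set.uIcc_of_le hyc] at ht
        have ht0 : t ≠ 0 := ne_of_gt (lt_of_lt_of_le hy ht.1)
        exact ((hasDerivAt_inv ht0).neg).congr_deriv (neg_neg _)
      have hii : IntervalIntegrable (fun s : ℝ => (s ^ 2)⁻¹) volume y c := by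
        refine ContinuousOn.intervalIntegrable ?_
        rw [Set.uIcc_of_le hyc]
        exact ContinuousOn.inv₀ (continuousOn_pow 2)
          (fun s hs => pow_ne_zero 2 (ne_of_gt (lt_of_lt_of_le hy hs.1)))
      have hcalc := intervalIntegral.integral_eq_sub_of_hasDerivAt hder hii
      rw [← intervalIntegral.integral_of_le hyc, hcalc]
      show -c⁻¹ - -y⁻¹ ≤ y⁻¹
      have : 0 < c⁻¹ := by positivity
      linarith
    have hb3 : ∫ s in Set.Ioc y c, (‖ζ‖ * ‖u s‖ + ‖f s‖) ≤ C2 := by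
      refine setIntegral_mono_set ((huInt.norm.const_mul ‖ζ‖).add hfInt.norm)
        (ae_of_all _ fun s => by positivity) (HasSubset.Subset.eventuallyLE hsubyc)
    have hwy : w * y⁻¹ = w⁻¹ := by
      rw [← hww, mul_inv, ← mul_assoc, mul_inv_cancel₀ hw.ne', one_mul]
    calc ‖B y‖ ≤ ∫ s in Set.Ioc y c, ‖g s‖ := hnorm1
      _ ≤ _ := hmono
      _ = _ := hsplit
      _ ≤ |q| / 2 * (w⁻¹ * Ku + w * y⁻¹) + C2 := by
          have hq2 : (0:ℝ) ≤ |q| / 2 := by positivity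
          have h1 : w⁻¹ * (∫ s in Set.Ioc y c, ‖u s‖ ^ 2) ≤ w⁻¹ * Ku :=
            mul_le_mul_of_nonneg_left hb1 (inv_nonneg.2 hw.le)
          have h2 : w * (∫ s in Set.Ioc y c, (s ^ 2)⁻¹) ≤ w * y⁻¹ :=
            mul_le_mul_of_nonneg_left hb2 hw.le
          have := mul_le_mul_of_nonneg_left (add_le_add h1 h2) hq2
          linarith
      _ = C1 * w⁻¹ + C2 := by rw [hwy, hC1def]; ring
  -- B is integrable on (0, c]
  have hbdInt : IntegrableOn (fun y => C1 * (Real.sqrt y)⁻¹ + C2) (Set.Ioc 0 c) := by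
    have hr : IntegrableOn (fun y : ℝ => y ^ (-(1/2) : ℝ)) (Set.Ioc 0 c) :=
      (intervalIntegral.intervalIntegrable_rpow' (by norm_num)).1
    have : IntegrableOn (fun y : ℝ => (Real.sqrt y)⁻¹) (Set.Ioc 0 c) := by
      refine hr.congr_fun (fun y hy => ?_) measurableSet_Ioc
      rw [Real.sqrt_eq_rpow, ← Real.rpow_neg hy.1.le]
    exact (this.const_mul C1).add (integrableOn_const measure_Ioc_lt_top.ne)
  have hBint : IntegrableOn B (Set.Ioc 0 c) := by
    refine Integrable.mono' hbdInt hBmeas ?_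
    exact (ae_restrict_iff' measurableSet_Ioc).2 (ae_of_all _ fun y hy => hBbd y hy.1 hy.2)
  -- the limit
  refine ⟨u c - u' c * (c : ℂ) + ∫ y in Set.Ioc 0 c, B y, ?_⟩
  have hev : ∀ᶠ x in (nhdsWithin (0:ℝ) (Set.Ioi 0)),
      u x = (u c - u' c * (c : ℂ) + ∫ y in Set.Ioc 0 c, B y) + u' c * (x : ℂ)
        - ∫ y in Set.Ioc 0 x, B y := by
    filter_upwards [Ioo_mem_nhdsGT hc0] with x hx
    have h1 := hrep x hx.1 hx.2
    have hsplitI : ∫ y in Set.Ioc 0 c, B y =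
        (∫ y in Set.Ioc 0 x, B y) + ∫ y in Set.Ioc x c, B y := by
      rw [← setIntegral_union (Set.Ioc_disjoint_Ioc_of_le le_rfl) measurableSet_Ioc
        (hBint.mono_set (Set.Ioc_subset_Ioc_right hx.2.le))
        (hBint.mono_set (Set.Ioc_subset_Ioc_left hx.1.le)),
        Set.Ioc_union_Ioc_eq_Ioc hx.1.le hx.2.le]
    rw [h1, intervalIntegral.integral_of_le hx.2.le]
    rw [hsplitI]
    push_cast
    ring
  rw [tendsto_congr' hev]
  have t1 : Tendsto (fun x : ℝ => u' c * (x : ℂ)) (nhdsWithin (0:ℝ) (Set.Ioi 0)) (nhds 0) := by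
    have h0 : Tendsto (fun x : ℝ => (x : ℂ)) (nhdsWithin (0:ℝ) (Set.Ioi 0)) (nhds ((0:ℝ) : ℂ)) :=
      (Complex.continuous_ofReal.tendsto (0:ℝ)).mono_left nhdsWithin_le_nhds
    simpa using h0.const_mul (u' c)
  have t2 : Tendsto (fun x : ℝ => ∫ y in Set.Ioc 0 x, B y)
      (nhdsWithin (0:ℝ) (Set.Ioi 0)) (nhds 0) := by
    have tmain : Tendsto (fun x : ℝ => ∫ y in Set.Ioc 0 c, (Set.Ioc 0 x).indicator B y)
        (nhdsWithin (0:ℝ) (Set.Ioi 0)) (nhds (∫ y in Set.Ioc 0 c, (0:ℂ))) := by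
      refine tendsto_integral_filter_of_dominated_convergence (fun y => ‖B y‖)
        (Eventually.of_forall fun x => hBmeas.indicator measurableSet_Ioc)
        (Eventually.of_forall fun x => ae_of_all _ fun y => norm_indicator_le_norm_self _ _)
        hBint.norm ?_
      refine (ae_restrict_iff' measurableSet_Ioc).2 (ae_of_all _ fun y hy => ?_)
      have hev0 : ∀ᶠ x in nhdsWithin (0:ℝ) (Set.Ioi 0), (Set.Ioc 0 x).indicator B y = 0 := by
        filter_upwards [Ioo_mem_nhdsGT hy.1] with x hx
        exact Set.indicator_of_notMem (fun hmem => absurd hmem.2 (not_le.2 hx.2)) _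
      exact Tendsto.congr' (EventuallyEq.symm hev0) tendsto_const_nhds
    rw [integral_zero] at tmain
    refine Tendsto.congr' ?_ tmain
    filter_upwards [Ioo_mem_nhdsGT hc0] with x hx
    rw [integral_indicator measurableSet_Ioc, Measure.restrict_restrict measurableSet_Ioc,
      Set.Ioc_inter_Ioc, max_self, min_eq_left hx.2.le]
  have tc : Tendsto (fun _ : ℝ => u c - u' c * (c : ℂ) + ∫ y in Set.Ioc 0 c, B y)
      (nhdsWithin (0:ℝ) (Set.Ioi 0))
      (nhds (u c - u' c * (c : ℂ) + ∫ y in Set.Ioc 0 c, B y)) := tendsto_const_nhds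
  simpa using (tc.add t1).sub t2
end

section
/- Let a ∈ (0,1), q ∈ ℝ, and let u : (0,a] → ℂ be C¹ with u' locally absolutely continuous, satisfying −u'' + (q/x)u = F on (0,a) with F ∈ L²(0,a). Assume that the limit u(+0) exists and |u(x) − u(+0)| ≤ C₀ x|ln x| on (0,a]. Then the limit b_+(u) := lim_{x→0+} ( u'(x) − q u(+0) ln x ) exists, and |u'(x) − q u(+0) ln x − b_+(u)| ≤ C x^{1/2} as x → 0+, with C depending only on q, a, C₀, ‖F‖_{L²}, |u(a)|, |u'(a)|. -/
/-!
Put `φ x = u' x - q u(+0) log x`. By the equation, `φ' = g` with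
`g s = (q / s) (u s - u(+0)) - F s`, and the hypothesis on `u` together with
`|log s| ≤ 2 / √s` gives `‖g s‖ ≤ 2 |q| C₀ / √s + ‖F s‖`. This majorant is integrable on `(0, a]`,
so `b₊ = φ a - ∫₀^a g` is well defined and `φ x - b₊ = ∫₀^x g`. Integrating the majorant, with
Cauchy–Schwarz for the `F` part, bounds this by `(4 |q| C₀ + ‖F‖₂) √x`.
-/

open MeasureTheory Filter Set Real Topology

theorem aestronglyMeasurable_restrict_of_hasDerivAt {E : Type*} [NormedAddCommGroup E]
    [NormedSpace ℝ E] [CompleteSpace E] {f f' : ℝ → E} {s : Set ℝ} (μ : Measure ℝ)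
    (hs : MeasurableSet s) (h : ∀ x ∈ s, HasDerivAt f (f' x) x) :
    AEStronglyMeasurable f' (μ.restrict s) :=
  (aestronglyMeasurable_deriv f _).congr
    ((ae_restrict_iff' hs).2 (ae_of_all _ fun x hx => (h x hx).deriv))

theorem abs_log_le_two_mul_inv_sqrt {s : ℝ} (h0 : 0 < s) (h1 : s ≤ 1) :
    |log s| ≤ 2 * (√s)⁻¹ := by
  have h := log_le_sub_one_of_pos (inv_pos.2 (sqrt_pos.2 h0))
  rw [log_inv, log_sqrt h0.le] at h
  rw [abs_of_nonpos (log_nonpos h0.le h1)]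
  linarith [inv_nonneg.2 (sqrt_nonneg s)]

theorem integrableOn_inv_sqrt_Ioc (x : ℝ) : IntegrableOn (fun s => (√s)⁻¹) (Ioc 0 x) := by
  rcases le_or_gt x 0 with hx | hx
  · simp [Ioc_eq_empty_of_le hx]
  refine ((intervalIntegrable_iff_integrableOn_Ioc_of_le hx.le).1
    (intervalIntegral.intervalIntegrable_rpow' (r := -(1 / 2)) (by norm_num))).congr_fun
      (fun s hs => ?_) measurableSet_Ioc
  beta_reduce
  rw [sqrt_eq_rpow, rpow_neg hs.1.le]

theorem integral_inv_sqrt_Ioc {x : ℝ} (hx : 0 ≤ x) : ∫ s in Ioc 0 x, (√s)⁻¹ = 2 * √x := by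
  rw [setIntegral_congr_fun measurableSet_Ioc (g := fun s => s ^ (-(1 / 2) : ℝ))
      fun s hs => by beta_reduce; rw [sqrt_eq_rpow, rpow_neg hs.1.le],
    ← intervalIntegral.integral_of_le hx, integral_rpow (Or.inl (by norm_num)),
    sqrt_eq_rpow, zero_rpow (by norm_num)]
  norm_num
  ring

theorem integral_norm_le_sqrt_measureReal_mul_sqrt {α E : Type*} [MeasurableSpace α]
    [NormedAddCommGroup E] {μ : Measure α} [IsFiniteMeasure μ] {f : α → E} (hf : MemLp f 2 μ) :
    ∫ x, ‖f x‖ ∂μ ≤ √(μ.real univ) * √(∫ x, ‖f x‖ ^ 2 ∂μ) := by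
  have h := integral_mul_norm_le_Lp_mul_Lq (f := fun x => ‖f x‖) (g := fun _ => (1 : ℝ)) (μ := μ)
    Real.HolderConjugate.two_two (by simpa using hf.norm) (by simpa using memLp_const (1 : ℝ))
  simp only [norm_norm, norm_one, mul_one, one_pow, integral_const, smul_eq_mul, rpow_two,
    ← sqrt_eq_rpow] at h
  rwa [mul_comm] at h

theorem setIntegral_Ioc_norm_le_sqrt_mul_sqrt {E : Type*} [NormedAddCommGroup E] {F : ℝ → E}
    {a x : ℝ} (hF : MemLp F 2 (volume.restrict (Ioc 0 a))) (hx : x ∈ Ioc 0 a) :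
    ∫ s in Ioc 0 x, ‖F s‖ ≤ √(∫ s in Ioc 0 a, ‖F s‖ ^ 2) * √x := by
  have hsub : Ioc 0 x ⊆ Ioc 0 a := Ioc_subset_Ioc_right hx.2
  have h := integral_norm_le_sqrt_measureReal_mul_sqrt (hF.restrict (Ioc 0 x))
  rw [Measure.restrict_restrict_of_subset hsub, measureReal_restrict_apply_univ,
    volume_real_Ioc_of_le hx.1.le, sub_zero] at h
  refine h.trans ?_
  rw [mul_comm]
  exact mul_le_mul_of_nonneg_right (sqrt_le_sqrt (setIntegral_mono_set
    ((memLp_two_iff_integrable_sq_norm hF.1).1 hF) (ae_of_all _ fun s => sq_nonneg _)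
    hsub.eventuallyLE)) (sqrt_nonneg x)

section InvSqrtMajorant

variable {E : Type*} [NormedAddCommGroup E] {g F : ℝ → E} {a A : ℝ}

theorem integrableOn_Ioc_of_norm_le_inv_sqrt_add
    (hg : AEStronglyMeasurable g (volume.restrict (Ioc 0 a)))
    (hF : MemLp F 2 (volume.restrict (Ioc 0 a)))
    (hle : ∀ s ∈ Ioc 0 a, ‖g s‖ ≤ A * (√s)⁻¹ + ‖F s‖) : IntegrableOn g (Ioc 0 a) :=
  Integrable.mono' (((integrableOn_inv_sqrt_Ioc a).const_mul A).add
      (hF.integrable one_le_two).norm) hg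
    ((ae_restrict_iff' measurableSet_Ioc).2 (ae_of_all _ hle))

theorem norm_setIntegral_Ioc_le_mul_sqrt [NormedSpace ℝ E]
    (hg : AEStronglyMeasurable g (volume.restrict (Ioc 0 a)))
    (hF : MemLp F 2 (volume.restrict (Ioc 0 a)))
    (hle : ∀ s ∈ Ioc 0 a, ‖g s‖ ≤ A * (√s)⁻¹ + ‖F s‖) {x : ℝ} (hx : x ∈ Ioc 0 a) :
    ‖∫ s in Ioc 0 x, g s‖ ≤ (2 * A + √(∫ s in Ioc 0 a, ‖F s‖ ^ 2)) * √x := by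
  have hsub : Ioc 0 x ⊆ Ioc 0 a := Ioc_subset_Ioc_right hx.2
  have hF1 : IntegrableOn (fun s => ‖F s‖) (Ioc 0 x) :=
    (IntegrableOn.mono_set (hF.integrable one_le_two) hsub).norm
  calc ‖∫ s in Ioc 0 x, g s‖ ≤ ∫ s in Ioc 0 x, ‖g s‖ := norm_integral_le_integral_norm g
    _ ≤ ∫ s in Ioc 0 x, (A * (√s)⁻¹ + ‖F s‖) :=
      setIntegral_mono_on
        ((integrableOn_Ioc_of_norm_le_inv_sqrt_add hg hF hle).mono_set hsub).norm
        (((integrableOn_inv_sqrt_Ioc x).const_mul A).add hF1) measurableSet_Ioc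
        fun s hs => hle s (hsub hs)
    _ = A * (2 * √x) + ∫ s in Ioc 0 x, ‖F s‖ := by
      rw [integral_add ((integrableOn_inv_sqrt_Ioc x).const_mul A) hF1, integral_const_mul,
        integral_inv_sqrt_Ioc hx.1.le]
    _ ≤ A * (2 * √x) + √(∫ s in Ioc 0 a, ‖F s‖ ^ 2) * √x := by
      gcongr
      exact setIntegral_Ioc_norm_le_sqrt_mul_sqrt hF hx
    _ = (2 * A + √(∫ s in Ioc 0 a, ‖F s‖ ^ 2)) * √x := by ring

end InvSqrtMajorant

theorem sub_eq_setIntegral_Ioc_of_hasDerivAt {E : Type*} [NormedAddCommGroup E]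
    [NormedSpace ℝ E] [CompleteSpace E] {φ g : ℝ → E} {a x : ℝ}
    (hφ : ContinuousOn φ (Ioc 0 a)) (hderiv : ∀ y ∈ Ioo 0 a, HasDerivAt φ (g y) y)
    (hg : IntegrableOn g (Ioc 0 a)) (hx : x ∈ Ioc 0 a) :
    φ x - (φ a - ∫ s in Ioc 0 a, g s) = ∫ s in Ioc 0 x, g s := by
  have hxa : IntegrableOn g (Ioc x a) := hg.mono_set (Ioc_subset_Ioc_left hx.1.le)
  have hftc : ∫ s in Ioc x a, g s = φ a - φ x := by
    rw [← intervalIntegral.integral_of_le hx.2]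
    exact intervalIntegral.integral_eq_sub_of_hasDerivAt_of_le hx.2
      (hφ.mono fun s hs => ⟨hx.1.trans_le hs.1, hs.2⟩)
      (fun y hy => hderiv y ⟨hx.1.trans hy.1, hy.2⟩)
      ((intervalIntegrable_iff_integrableOn_Ioc_of_le hx.2).2 hxa)
  rw [← Ioc_union_Ioc_eq_Ioc hx.1.le hx.2, setIntegral_union (Ioc_disjoint_Ioc_of_le le_rfl)
    measurableSet_Ioc (hg.mono_set (Ioc_subset_Ioc_right hx.2)) hxa, hftc]
  abel

theorem tendsto_nhdsGT_zero_of_norm_sub_le_mul_sqrt {E : Type*} [NormedAddCommGroup E]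
    {φ : ℝ → E} {b : E} {a C : ℝ} (ha : 0 < a)
    (h : ∀ x ∈ Ioc 0 a, ‖φ x - b‖ ≤ C * √x) : Tendsto φ (𝓝[>] 0) (𝓝 b) := by
  rw [← tendsto_sub_nhds_zero_iff]
  refine squeeze_zero_norm' ?_ (?_ : Tendsto (fun x => C * √x) (𝓝[>] 0) (𝓝 0))
  · filter_upwards [Ioc_mem_nhdsGT ha] with x hx using h x hx
  · simpa using ((continuous_sqrt.const_mul C).tendsto 0).mono_left nhdsWithin_le_nhds

theorem norm_ofReal_div_mul_le_of_norm_le_mul_abs_log {q C₀ s : ℝ} {v : ℂ} (hs0 : 0 < s)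
    (hs1 : s < 1) (hv : ‖v‖ ≤ C₀ * (s * |log s|)) :
    ‖((q / s : ℝ) : ℂ) * v‖ ≤ 2 * |q| * C₀ * (√s)⁻¹ := by
  have hlog : 0 < s * |log s| := mul_pos hs0 (abs_pos.2 (log_neg hs0 hs1).ne)
  have hC₀ : 0 ≤ C₀ := nonneg_of_mul_nonneg_left ((norm_nonneg v).trans hv) hlog
  calc ‖((q / s : ℝ) : ℂ) * v‖ = |q| / s * ‖v‖ := by
        rw [norm_mul, Complex.norm_real, norm_div, norm_of_nonneg hs0.le, norm_eq_abs]
    _ ≤ |q| / s * (C₀ * (s * |log s|)) := by gcongr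
    _ = |q| * C₀ * |log s| := by field_simp
    _ ≤ |q| * C₀ * (2 * (√s)⁻¹) := by gcongr; exact abs_log_le_two_mul_inv_sqrt hs0 hs1.le
    _ = 2 * |q| * C₀ * (√s)⁻¹ := by ring

section CoulombEquation

variable {a q : ℝ} {u u' F : ℝ → ℂ}

theorem hasDerivAt_sub_log_of_hasDerivAt_coulomb
    (hu'' : ∀ x ∈ Ioo 0 a, HasDerivAt u' (((q / x : ℝ) : ℂ) * u x - F x) x) (u0 : ℂ) :
    ∀ x ∈ Ioo 0 a, HasDerivAt (fun y => u' y - q * u0 * (log y : ℂ))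
      (((q / x : ℝ) : ℂ) * (u x - u0) - F x) x := by
  intro x hx
  have hlog := ((hasDerivAt_log hx.1.ne').ofReal_comp).const_mul ((q : ℂ) * u0)
  refine ((hu'' x hx).sub hlog).congr_deriv ?_
  push_cast
  ring

theorem memLp_two_of_hasDerivAt_coulomb (hF : IntegrableOn (fun x => ‖F x‖ ^ 2) (Ioo 0 a))
    (hu' : ∀ x ∈ Ioo 0 a, HasDerivAt u (u' x) x)
    (hu'' : ∀ x ∈ Ioo 0 a, HasDerivAt u' (((q / x : ℝ) : ℂ) * u x - F x) x) :
    MemLp F 2 (volume.restrict (Ioc 0 a)) := by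
  have hu : AEStronglyMeasurable u (volume.restrict (Ioo 0 a)) :=
    ContinuousOn.aestronglyMeasurable
      (fun x hx => (hu' x hx).continuousAt.continuousWithinAt) measurableSet_Ioo
  have hcoulomb : AEStronglyMeasurable (fun x => ((q / x : ℝ) : ℂ) * u x)
      (volume.restrict (Ioo 0 a)) :=
    (Complex.measurable_ofReal.comp (measurable_const.div measurable_id)).aestronglyMeasurable.mul
      hu
  have hF_meas : AEStronglyMeasurable F (volume.restrict (Ioo 0 a)) :=
    (hcoulomb.sub (aestronglyMeasurable_restrict_of_hasDerivAt _ measurableSet_Ioo hu'')).congr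
      (ae_of_all _ fun x => sub_sub_cancel _ _)
  rw [Measure.restrict_congr_set Ioo_ae_eq_Ioc.symm]
  exact (memLp_two_iff_integrable_sq_norm hF_meas).2 hF

end CoulombEquation

theorem stmt_14_general (a : ℝ) (ha : 0 < a) (ha1 : a < 1) (q : ℝ)
    (u u' : ℝ → ℂ) (F : ℝ → ℂ)
    (hF : IntegrableOn (fun x => ‖F x‖ ^ 2) (Set.Ioo 0 a))
    (hu' : ∀ x ∈ Set.Ioo (0 : ℝ) a, HasDerivAt u (u' x) x)
    (hu'c : ContinuousOn u' (Set.Ioc 0 a))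
    (hu'' : ∀ x ∈ Set.Ioo (0 : ℝ) a,
      HasDerivAt u' (((q / x : ℝ) : ℂ) * u x - F x) x)
    (u0 : ℂ)
    (C₀ : ℝ) (hC₀ : ∀ x ∈ Set.Ioc (0 : ℝ) a, ‖u x - u0‖ ≤ C₀ * (x * |Real.log x|)) :
    ∃ b : ℂ, ∃ C : ℝ,
      Tendsto (fun x : ℝ => u' x - (q : ℂ) * u0 * (Real.log x : ℂ))
        (nhdsWithin 0 (Set.Ioi 0)) (nhds b) ∧
      ∀ x ∈ Set.Ioc (0 : ℝ) a,
        ‖u' x - (q : ℂ) * u0 * (Real.log x : ℂ) - b‖ ≤ C * Real.sqrt x := by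
  set φ : ℝ → ℂ := fun x => u' x - q * u0 * (log x : ℂ)
  set g : ℝ → ℂ := fun s => ((q / s : ℝ) : ℂ) * (u s - u0) - F s
  have hφ_deriv : ∀ x ∈ Ioo 0 a, HasDerivAt φ (g x) x :=
    hasDerivAt_sub_log_of_hasDerivAt_coulomb hu'' u0
  have hφ_cont : ContinuousOn φ (Ioc 0 a) :=
    hu'c.sub (continuousOn_const.mul (Complex.continuous_ofReal.comp_continuousOn
      (continuousOn_log.mono fun x hx => hx.1.ne')))
  have hg_meas : AEStronglyMeasurable g (volume.restrict (Ioc 0 a)) := by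
    rw [← Measure.restrict_congr_set Ioo_ae_eq_Ioc]
    exact aestronglyMeasurable_restrict_of_hasDerivAt _ measurableSet_Ioo hφ_deriv
  have hF_L2 := memLp_two_of_hasDerivAt_coulomb hF hu' hu''
  have hg_le : ∀ s ∈ Ioc 0 a, ‖g s‖ ≤ 2 * |q| * C₀ * (√s)⁻¹ + ‖F s‖ := fun s hs =>
    (norm_sub_le _ _).trans (add_le_add_left
      (norm_ofReal_div_mul_le_of_norm_le_mul_abs_log hs.1 (hs.2.trans_lt ha1) (hC₀ s hs)) _)
  have hbound : ∀ x ∈ Ioc 0 a, ‖φ x - (φ a - ∫ s in Ioc 0 a, g s)‖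
      ≤ (2 * (2 * |q| * C₀) + √(∫ s in Ioc 0 a, ‖F s‖ ^ 2)) * √x := fun x hx => by
    rw [sub_eq_setIntegral_Ioc_of_hasDerivAt hφ_cont hφ_deriv
      (integrableOn_Ioc_of_norm_le_inv_sqrt_add hg_meas hF_L2 hg_le) hx]
    exact norm_setIntegral_Ioc_le_mul_sqrt hg_meas hF_L2 hg_le hx
  exact ⟨_, _, tendsto_nhdsGT_zero_of_norm_sub_le_mul_sqrt ha hbound, hbound⟩

/-- Derivative asymptotics: for a solution of `−u'' + (q/x)u = F` on `(0,a)`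
with `u(x) = u(+0) + O(x ln x)`, the limit `b₊(u) = lim_{x→0+}(u'(x) − q u(+0) ln x)`
exists and the remainder is `O(x^{1/2})`. -/
theorem stmt_14 (a : ℝ) (ha : 0 < a) (ha1 : a < 1) (q : ℝ)
    (u u' : ℝ → ℂ) (F : ℝ → ℂ)
    (hF : IntegrableOn (fun x => ‖F x‖ ^ 2) (Set.Ioo 0 a))
    (hu' : ∀ x ∈ Set.Ioo (0 : ℝ) a, HasDerivAt u (u' x) x)
    (hu'c : ContinuousOn u' (Set.Ioc 0 a))
    (hu'' : ∀ x ∈ Set.Ioo (0 : ℝ) a,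
      HasDerivAt u' (((q / x : ℝ) : ℂ) * u x - F x) x)
    (u0 : ℂ) (hlim : Tendsto u (nhdsWithin 0 (Set.Ioi 0)) (nhds u0))
    (C₀ : ℝ) (hC₀ : ∀ x ∈ Set.Ioc (0 : ℝ) a, ‖u x - u0‖ ≤ C₀ * (x * |Real.log x|)) :
    ∃ b : ℂ, ∃ C : ℝ,
      Tendsto (fun x : ℝ => u' x - (q : ℂ) * u0 * (Real.log x : ℂ))
        (nhdsWithin 0 (Set.Ioi 0)) (nhds b) ∧
      ∀ x ∈ Set.Ioc (0 : ℝ) a,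
        ‖u' x - (q : ℂ) * u0 * (Real.log x : ℂ) - b‖ ≤ C * Real.sqrt x :=
  stmt_14_general a ha ha1 q u u' F hF hu' hu'c hu'' u0 C₀ hC₀
end
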